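/- Let d ≥ 2, α ∈ (1,2), n ∈ ℕ, and x₁, …, x_d ≥ 0. Then α^d · ∑ over all (j₁,…,j_d) ∈ ℕ₀^d with j₁+⋯+j_d = n of [Γ(αn+1)/(Γ(αj₁+1)⋯Γ(αj_d+1))] · x₁^{αj₁} ⋯ x_d^{αj_d} ≥ (x₁+⋯+x_d)^{αn}. -/

import Mathlib

/-!
Split off the first coordinate: with `s` the sum of the others, the two-variable inequality bounds
`(x₀ + s) ^ (α n)` by `α` times a sum of terms `x₀ ^ (α a) * s ^ (α b)`, and by induction each
`s ^ (α b)` is at most `α ^ (d - 1)` times the `(d - 1)`-variable sum of degree `b`. The factor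
`Γ(α b + 1)` then cancels between the two Gamma quotients, which recombine into the `d`-variable
coefficients. The induction starts at `d = 0`, where both sides are `0 ^ (α n)`.
-/

open Finset Finset.Nat Real

namespace Finset.Nat

theorem filter_piFinset_range_sum_eq (d n : ℕ) :
    (Fintype.piFinset fun _ : Fin d => range (n + 1)).filter (fun j => ∑ i, j i = n) =
      antidiagonalTuple d n := by
  ext j
  simp only [mem_filter, Fintype.mem_piFinset, mem_range, mem_antidiagonalTuple,
    and_iff_right_iff_imp]
  rintro rfl i
  exact Nat.lt_succ_of_le (single_le_sum (fun _ _ => Nat.zero_le _) (mem_univ i))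

theorem sum_antidiagonalTuple_succ {M : Type*} [AddCommMonoid M] (d n : ℕ)
    (f : (Fin (d + 1) → ℕ) → M) :
    ∑ j ∈ antidiagonalTuple (d + 1) n, f j =
      ∑ p ∈ antidiagonal n, ∑ k ∈ antidiagonalTuple d p.2, f (Fin.cons p.1 k) := by
  rw [sum_sigma']
  refine sum_bij' (fun j _ => ⟨(j 0, ∑ i, Fin.tail j i), Fin.tail j⟩)
    (fun q _ => Fin.cons q.1.1 q.2) ?_ ?_ ?_ ?_ ?_
  · intro j hj
    simpa [mem_antidiagonalTuple, Fin.sum_univ_succ, Fin.tail] using hj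
  · rintro ⟨⟨a, b⟩, k⟩ hq
    simp only [mem_sigma, HasAntidiagonal.mem_antidiagonal, mem_antidiagonalTuple] at hq
    simp [mem_antidiagonalTuple, Fin.sum_univ_succ, hq.2, hq.1]
  · intro j _
    exact Fin.cons_self_tail j
  · rintro ⟨⟨a, b⟩, k⟩ hq
    simp only [mem_sigma, HasAntidiagonal.mem_antidiagonal, mem_antidiagonalTuple] at hq
    simp [Fin.tail_cons, hq.2]
  · intro j _
    simp only [Fin.cons_self_tail]

end Finset.Nat

theorem sum_range_succ_sub_eq_sum_antidiagonal {R M : Type*} [AddGroupWithOne R]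
    [AddCommMonoid M] (f : R → R → M) (n : ℕ) :
    ∑ j ∈ range (n + 1), f j ((n : R) - j) = ∑ p ∈ antidiagonal n, f p.1 p.2 := by
  rw [Nat.sum_antidiagonal_eq_sum_range_succ (fun a b => f a b)]
  refine sum_congr rfl fun j hj => ?_
  rw [Nat.cast_sub (Nat.lt_succ_iff.mp (mem_range.mp hj))]

noncomputable def gammaMultinomialSum (α : ℝ) {d : ℕ} (n : ℕ) (x : Fin d → ℝ) : ℝ :=
  ∑ j ∈ antidiagonalTuple d n,
    (Gamma (α * n + 1) / ∏ i, Gamma (α * (j i : ℝ) + 1)) * ∏ i, x i ^ (α * (j i : ℝ))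

section

variable {α : ℝ}

theorem gammaMultinomialSum_fin_zero (hα : 0 < α) (n : ℕ) (x : Fin 0 → ℝ) :
    gammaMultinomialSum α n x = (0 : ℝ) ^ (α * n) := by
  cases n with
  | zero => simp [gammaMultinomialSum]
  | succ n =>
    rw [zero_rpow (by positivity)]
    simp [gammaMultinomialSum, antidiagonalTuple_zero_succ]

theorem gammaMultinomialSum_cons (hα : 0 ≤ α) {d : ℕ} (n : ℕ) (x₀ : ℝ) (x : Fin d → ℝ) :
    gammaMultinomialSum α n (Fin.cons x₀ x : Fin (d + 1) → ℝ) =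
      ∑ p ∈ antidiagonal n, Gamma (α * n + 1) / (Gamma (α * p.1 + 1) * Gamma (α * p.2 + 1)) *
        x₀ ^ (α * p.1) * gammaMultinomialSum α p.2 x := by
  rw [gammaMultinomialSum, sum_antidiagonalTuple_succ]
  refine sum_congr rfl fun p _ => ?_
  rw [gammaMultinomialSum, mul_sum]
  refine sum_congr rfl fun k _ => ?_
  have hΓ : Gamma (α * p.2 + 1) ≠ 0 := by positivity
  simp only [Fin.prod_univ_succ, Fin.cons_zero, Fin.cons_succ]
  field_simp

theorem rpow_sum_le_pow_mul_gammaMultinomialSum (hα : 0 < α)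
    (hneo : ∀ (n : ℕ) (x y : ℝ), 0 ≤ x → 0 ≤ y →
      (x + y) ^ (α * n) ≤ α * ∑ p ∈ antidiagonal n,
        Gamma (α * n + 1) / (Gamma (α * p.1 + 1) * Gamma (α * p.2 + 1)) *
          x ^ (α * p.1) * y ^ (α * p.2))
    {d : ℕ} (n : ℕ) (x : Fin d → ℝ) (hx : ∀ i, 0 ≤ x i) :
    (∑ i, x i) ^ (α * n) ≤ α ^ d * gammaMultinomialSum α n x := by
  induction d generalizing n with
  | zero => simp [gammaMultinomialSum_fin_zero hα]
  | succ d ih =>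
    have htail : 0 ≤ ∑ i, x (Fin.succ i) := sum_nonneg fun i _ => hx _
    rw [Fin.sum_univ_succ, ← Fin.cons_self_tail x, gammaMultinomialSum_cons hα.le, pow_succ',
      mul_assoc, mul_sum]
    refine (hneo n _ _ (hx 0) htail).trans ?_
    gcongr α * ∑ p ∈ _, ?_ with p
    rw [mul_left_comm]
    have hx₀ := hx 0
    exact mul_le_mul_of_nonneg_left (ih _ _ fun i => hx _) (by positivity)

end

theorem multivariate_neo_classical_reversed_general (d : ℕ)
    (α : ℝ) (hα1 : 1 < α)
    (hneo : ∀ (n : ℕ) (x y : ℝ), 0 ≤ x → 0 ≤ y →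
      (x + y) ^ (α * (n : ℝ)) ≤
        α * ∑ j ∈ Finset.range (n + 1),
          (Real.Gamma (α * n + 1) /
            (Real.Gamma (α * j + 1) * Real.Gamma (α * ((n : ℝ) - (j : ℝ)) + 1))) *
            x ^ (α * (j : ℝ)) * y ^ (α * ((n : ℝ) - (j : ℝ))))
    (n : ℕ) (x : Fin d → ℝ) (hx : ∀ i, 0 ≤ x i) :
    (∑ i, x i) ^ (α * (n : ℝ)) ≤
      α ^ d * ∑ j ∈ (Fintype.piFinset fun _ : Fin d => Finset.range (n + 1)).filter
          (fun j => ∑ i, j i = n),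
        (Real.Gamma (α * n + 1) / ∏ i, Real.Gamma (α * (j i : ℝ) + 1)) *
          ∏ i, (x i) ^ (α * (j i : ℝ)) := by
  rw [filter_piFinset_range_sum_eq]
  refine rpow_sum_le_pow_mul_gammaMultinomialSum (by linarith) (fun m y z hy hz => ?_) n x hx
  exact (hneo m y z hy hz).trans_eq (congrArg (α * ·) (sum_range_succ_sub_eq_sum_antidiagonal
    (fun a b => Gamma (α * m + 1) / (Gamma (α * a + 1) * Gamma (α * b + 1)) *
      y ^ (α * a) * z ^ (α * b)) m))

/-- Reversed multivariate neo-classical inequality for `α ∈ (1,2)`, assuming the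
reversed two-variable neo-classical inequality as a hypothesis. -/
theorem multivariate_neo_classical_reversed (d : ℕ) (hd : 2 ≤ d)
    (α : ℝ) (hα1 : 1 < α) (hα2 : α < 2)
    (hneo : ∀ (n : ℕ) (x y : ℝ), 0 ≤ x → 0 ≤ y →
      (x + y) ^ (α * (n : ℝ)) ≤
        α * ∑ j ∈ Finset.range (n + 1),
          (Real.Gamma (α * n + 1) /
            (Real.Gamma (α * j + 1) * Real.Gamma (α * ((n : ℝ) - (j : ℝ)) + 1))) *
            x ^ (α * (j : ℝ)) * y ^ (α * ((n : ℝ) - (j : ℝ))))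
    (n : ℕ) (x : Fin d → ℝ) (hx : ∀ i, 0 ≤ x i) :
    (∑ i, x i) ^ (α * (n : ℝ)) ≤
      α ^ d * ∑ j ∈ (Fintype.piFinset fun _ : Fin d => Finset.range (n + 1)).filter
          (fun j => ∑ i, j i = n),
        (Real.Gamma (α * n + 1) / ∏ i, Real.Gamma (α * (j i : ℝ) + 1)) *
          ∏ i, (x i) ^ (α * (j i : ℝ)) :=
  multivariate_neo_classical_reversed_general d α hα1 hneo n x hx
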